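/- If D is a connected switching-stable oriented graph on n vertices, then 2^{n-1} divides n! (equivalently, 2^{n-1} divides |Aut(G)| where G is the underlying undirected graph); in particular n is a power of 2. -/

import Mathlib

/-- A digraph on a vertex type `V`: a set of ordered pairs of vertices,
given by its adjacency relation. -/
structure Dgraph (V : Type*) where
  Adj : V → V → Prop

namespace Dgraph

variable {V W : Type*}

/-- Switching at a vertex `v`: every edge incident with `v` is reversed. -/
def switchV (G : Dgraph V) (v : V) : Dgraph V :=
  ⟨fun a b => ((a = v ∨ b = v) ∧ G.Adj b a) ∨ (¬(a = v ∨ b = v) ∧ G.Adj a b)⟩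

/-- Switching about a set `S`: every edge with exactly one endpoint in `S` is reversed. -/
def switchSet (G : Dgraph V) (S : Set V) : Dgraph V :=
  ⟨fun a b => (((a ∈ S) ↔ (b ∈ S)) ∧ G.Adj a b) ∨ (¬((a ∈ S) ↔ (b ∈ S)) ∧ G.Adj b a)⟩

/-- Relabelling of a digraph by a permutation: `(γ a, γ b)` is an edge of `G.relabel γ`
whenever `(a,b)` is an edge of `G`. -/
def relabel (G : Dgraph V) (γ : Equiv.Perm V) : Dgraph V :=
  ⟨fun a b => G.Adj (γ.symm a) (γ.symm b)⟩

/-- Isomorphism of digraphs (possibly on different vertex types). -/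
def DIso (G : Dgraph V) (H : Dgraph W) : Prop :=
  ∃ e : V ≃ W, ∀ a b, G.Adj a b ↔ H.Adj (e a) (e b)

/-- An oriented graph: a digraph with no loops and no pair of opposite edges. -/
def IsOriented (G : Dgraph V) : Prop := ∀ a b, G.Adj a b → ¬ G.Adj b a

/-- The underlying undirected (simple) graph of a digraph. -/
def underlying (G : Dgraph V) : SimpleGraph V where
  Adj a b := a ≠ b ∧ (G.Adj a b ∨ G.Adj b a)
  symm := ⟨fun a b ⟨h1, h2⟩ => ⟨h1.symm, h2.symm⟩⟩
  loopless := ⟨fun a ⟨h1, _⟩ => h1 rfl⟩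

/-- The vertex set of the connected component (of the underlying graph) containing `v`. -/
def compSet (G : Dgraph V) (v : V) : Set V := {x | (underlying G).Reachable v x}

/-- The induced subdigraph on a set of vertices. -/
def induce (G : Dgraph V) (S : Set V) : Dgraph S := ⟨fun a b => G.Adj a b⟩

/-- A digraph is switching-stable if each vertex switching is isomorphic to it. -/
def SwitchStable (G : Dgraph V) : Prop := ∀ v, DIso (G.switchV v) G

/-- Isomorphism as a setoid on digraphs with a fixed vertex type. -/
def isoSetoid (V : Type*) : Setoid (Dgraph V) where
  r := DIso
  iseqv := by
    refine ⟨fun G => ⟨Equiv.refl V, fun a b => Iff.rfl⟩, ?_, ?_⟩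
    · rintro G H ⟨e, h⟩
      exact ⟨e.symm, fun a b => by simpa using (h (e.symm a) (e.symm b)).symm⟩
    · rintro G H K ⟨e, h⟩ ⟨f, h2⟩
      exact ⟨e.trans f, fun a b => (h a b).trans (h2 _ _)⟩

/-- The switching deck: the multiset of isomorphism classes of vertex switchings. -/
def deck (G : Dgraph V) [Fintype V] : Multiset (Quotient (isoSetoid V)) :=
  Finset.univ.val.map fun v => Quotient.mk (isoSetoid V) (G.switchV v)

/-- The `t`-deck: the deck augmented by `t` copies of the isomorphism class of `G`. -/
def tdeck (G : Dgraph V) [Fintype V] (t : ℕ) : Multiset (Quotient (isoSetoid V)) :=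
  Multiset.replicate t (Quotient.mk (isoSetoid V) G) + G.deck

end Dgraph

/-!
Let `Γ` be the group of permutations carrying `D` into its switching class `[D] = {D_S}`.
Switching one vertex at a time, stability makes `Γ` act transitively on `[D]`; for connected
oriented `D` the only coincidences among switchings are `D_S = D_{Sᶜ}`, so `|[D]| = 2^(n-1)`.
Orbit–stabilizer gives `2^(n-1) ∣ |Γ| ∣ n!`, and `v₂(n!) ≥ n - 1` forces `n` to be a power of 2:
`v₂((2m)!) = m + v₂(m!)`, while for odd `n = 2m + 1 > 1` already `v₂(n!) = v₂((2m)!) < 2m`.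
-/

open scoped Pointwise symmDiff

namespace Dgraph

variable {V : Type*}

@[ext]
lemma ext {G H : Dgraph V} (h : ∀ a b, G.Adj a b ↔ H.Adj a b) : G = H := by
  cases G; cases H
  congr
  funext a b
  exact propext (h a b)

instance : MulAction (Equiv.Perm V) (Dgraph V) where
  smul γ G := G.relabel γ
  one_smul _ := rfl
  mul_smul _ _ _ := rfl

@[simp]
lemma smul_adj (γ : Equiv.Perm V) (G : Dgraph V) (a b : V) :
    (γ • G).Adj a b ↔ G.Adj (γ⁻¹ a) (γ⁻¹ b) :=
  Iff.rfl

lemma switchV_eq_switchSet (G : Dgraph V) (v : V) : G.switchV v = G.switchSet {v} := by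
  ext a b
  simp only [switchV, switchSet, Set.mem_singleton_iff]
  by_cases ha : a = v <;> by_cases hb : b = v <;> simp [ha, hb]

@[simp]
lemma switchSet_empty (G : Dgraph V) : G.switchSet ∅ = G := by
  ext a b
  simp [switchSet]

lemma switchSet_compl (G : Dgraph V) (S : Set V) : G.switchSet Sᶜ = G.switchSet S := by
  ext a b
  simp only [switchSet, Set.mem_compl_iff, not_iff_not]

lemma switchSet_switchSet (G : Dgraph V) (S T : Set V) :
    (G.switchSet S).switchSet T = G.switchSet (S ∆ T) := by
  ext a b
  simp only [switchSet, Set.mem_symmDiff]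
  by_cases ha : a ∈ S <;> by_cases hb : b ∈ S <;> by_cases ha' : a ∈ T <;>
    by_cases hb' : b ∈ T <;> simp [ha, hb, ha', hb']

lemma smul_switchSet (γ : Equiv.Perm V) (G : Dgraph V) (S : Set V) :
    γ • G.switchSet S = (γ • G).switchSet (γ • S) := by
  ext a b
  simp only [smul_adj, switchSet, Set.mem_smul_set_iff_inv_smul_mem, Equiv.Perm.smul_def]

lemma eq_empty_or_eq_univ_of_switchSet_eq_self {G : Dgraph V} (hor : G.IsOriented)
    (hconn : G.underlying.Connected) {S : Set V} (h : G.switchSet S = G) :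
    S = ∅ ∨ S = Set.univ := by
  have hedge : ∀ a b, G.Adj a b → (a ∈ S ↔ b ∈ S) := by
    intro a b hab
    have hab' : (G.switchSet S).Adj a b := by rw [h]; exact hab
    rcases hab' with ⟨hS, -⟩ | ⟨-, hba⟩
    · exact hS
    · exact absurd hba (hor a b hab)
  have hadj : ∀ a b, G.underlying.Adj a b → (a ∈ S ↔ b ∈ S) := by
    rintro a b ⟨-, hab | hba⟩
    exacts [hedge a b hab, (hedge b a hba).symm]
  have hreach : ∀ a b, (a ∈ S ↔ b ∈ S) := by
    intro a b
    obtain ⟨w⟩ := hconn.preconnected a b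
    induction w with
    | nil => exact Iff.rfl
    | cons hxy _ ih => exact (hadj _ _ hxy).trans ih
  rcases S.eq_empty_or_nonempty with hS | ⟨s, hs⟩
  · exact Or.inl hS
  · exact Or.inr (Set.eq_univ_of_forall fun x => (hreach s x).1 hs)

lemma switchSet_injOn {G : Dgraph V} (hor : G.IsOriented) (hconn : G.underlying.Connected)
    (v : V) : Set.InjOn G.switchSet {S | v ∉ S} := by
  rintro S (hS : v ∉ S) T (hT : v ∉ T) hST
  have h : G.switchSet (S ∆ T) = G := by
    rw [← switchSet_switchSet, hST, switchSet_switchSet, symmDiff_self, Set.bot_eq_empty,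
      switchSet_empty]
  rcases eq_empty_or_eq_univ_of_switchSet_eq_self hor hconn h with h | h
  · exact symmDiff_eq_bot.1 h
  · have hv : v ∈ S ∆ T := h ▸ Set.mem_univ v
    simp [Set.mem_symmDiff, hS, hT] at hv

lemma exists_smul_eq_switchSet_singleton {G : Dgraph V} (hst : G.SwitchStable) (v : V) :
    ∃ γ : Equiv.Perm V, γ • G = G.switchSet {v} := by
  obtain ⟨e, he⟩ := hst v
  refine ⟨e⁻¹, ?_⟩
  ext a b
  rw [← switchV_eq_switchSet, he, smul_adj, inv_inv]

lemma exists_smul_eq_switchSet [Finite V] {G : Dgraph V} (hst : G.SwitchStable) (S : Set V) :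
    ∃ γ : Equiv.Perm V, γ • G = G.switchSet S := by
  classical
  suffices ∀ s : Finset V, ∃ γ : Equiv.Perm V, γ • G = G.switchSet s by
    simpa using this S.toFinite.toFinset
  intro s
  induction s using Finset.induction_on with
  | empty => exact ⟨1, by simp⟩
  | @insert a s ha ih =>
    obtain ⟨γ, hγ⟩ := ih
    obtain ⟨δ, hδ⟩ := exists_smul_eq_switchSet_singleton hst (γ⁻¹ a)
    refine ⟨γ * δ, ?_⟩
    have hdisj : Disjoint ({a} : Set V) s := Set.disjoint_singleton_left.2 ha
    rw [mul_smul, hδ, smul_switchSet, hγ, switchSet_switchSet, Set.smul_set_singleton,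
      Equiv.Perm.smul_def, Equiv.Perm.inv_def, Equiv.apply_symm_apply, symmDiff_comm,
      hdisj.symmDiff_eq_sup, Finset.coe_insert, Set.insert_eq]
    rfl

def switchingClass (G : Dgraph V) : Set (Dgraph V) := Set.range G.switchSet

lemma mem_switchingClass_self (G : Dgraph V) : G ∈ G.switchingClass :=
  ⟨∅, switchSet_empty G⟩

lemma switchingClass_switchSet (G : Dgraph V) (S : Set V) :
    (G.switchSet S).switchingClass = G.switchingClass := by
  have h : (G.switchSet S).switchSet = G.switchSet ∘ (S ∆ ·) := funext (switchSet_switchSet G S)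
  rw [switchingClass, switchingClass, h]
  exact (symmDiff_right_involutive S).surjective.range_comp G.switchSet

lemma switchingClass_eq_of_mem {G H : Dgraph V} (h : H ∈ G.switchingClass) :
    H.switchingClass = G.switchingClass := by
  obtain ⟨S, rfl⟩ := h
  exact switchingClass_switchSet G S

lemma smul_switchingClass (γ : Equiv.Perm V) (G : Dgraph V) :
    γ • G.switchingClass = (γ • G).switchingClass := by
  simp only [switchingClass, Set.smul_set_range, smul_switchSet]
  exact (MulAction.surjective γ).range_comp (γ • G).switchSet

/-- The paper's `Γ(G)`. -/
abbrev switchingGroup (G : Dgraph V) : Subgroup (Equiv.Perm V) :=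
  MulAction.stabilizer (Equiv.Perm V) G.switchingClass

lemma mem_switchingGroup_iff {G : Dgraph V} {γ : Equiv.Perm V} :
    γ ∈ G.switchingGroup ↔ γ • G ∈ G.switchingClass := by
  rw [MulAction.mem_stabilizer_iff, smul_switchingClass]
  refine ⟨fun h => h ▸ mem_switchingClass_self (γ • G), switchingClass_eq_of_mem⟩

lemma orbit_switchingGroup [Finite V] {G : Dgraph V} (hst : G.SwitchStable) :
    MulAction.orbit G.switchingGroup G = G.switchingClass := by
  ext H
  constructor
  · rintro ⟨γ, rfl⟩
    exact mem_switchingGroup_iff.1 γ.2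
  · rintro ⟨S, rfl⟩
    obtain ⟨γ, hγ⟩ := exists_smul_eq_switchSet hst S
    exact ⟨⟨γ, mem_switchingGroup_iff.2 ⟨S, hγ.symm⟩⟩, hγ⟩

lemma ncard_switchingClass [Finite V] {G : Dgraph V} (hor : G.IsOriented)
    (hconn : G.underlying.Connected) :
    G.switchingClass.ncard = 2 ^ (Nat.card V - 1) := by
  obtain ⟨v⟩ := hconn.nonempty
  have hclass : G.switchingClass = G.switchSet '' {S | v ∉ S} := by
    refine Set.Subset.antisymm ?_ (Set.image_subset_range _ _)
    rintro _ ⟨S, rfl⟩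
    by_cases hv : v ∈ S
    · exact ⟨Sᶜ, fun h => h hv, switchSet_compl G S⟩
    · exact ⟨S, hv, rfl⟩
  have hcard : {S : Set V | v ∉ S}.ncard = 2 ^ (Nat.card V - 1) := by
    have h : {S : Set V | v ∉ S} = 𝒫 {v}ᶜ := by
      ext S
      exact Set.subset_compl_singleton_iff.symm
    rw [h, Set.ncard_powerset, Set.ncard_compl, Set.ncard_singleton]
  rw [hclass, (switchSet_injOn hor hconn v).ncard_image, hcard]

end Dgraph

namespace Nat

lemma exists_eq_two_pow_of_two_pow_sub_one_dvd_factorial {n : ℕ} (hn : n ≠ 0)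
    (h : 2 ^ (n - 1) ∣ n !) : ∃ k, n = 2 ^ k := by
  have : Fact (Nat.Prime 2) := ⟨prime_two⟩
  rw [padicValNat_dvd_iff_le (factorial_ne_zero n)] at h
  induction n using Nat.strong_induction_on with
  | _ n ih =>
    obtain ⟨m, rfl | rfl⟩ := n.even_or_odd'
    · have hm : m ≠ 0 := by omega
      rw [padicValNat_factorial_mul] at h
      obtain ⟨k, hk⟩ := ih m (by omega) hm (by omega)
      exact ⟨k + 1, by rw [hk, pow_succ']⟩
    · rcases eq_or_ne m 0 with rfl | hm
      · exact ⟨0, rfl⟩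
      rw [padicValNat_factorial_mul_add m (by norm_num), padicValNat_factorial_mul] at h
      have := padicValNat_factorial_lt_of_ne_zero 2 hm
      omega

end Nat

open Dgraph in
/-- If `D` is a connected switching-stable oriented graph on `n` vertices, then
`2^(n-1)` divides `n!`; in particular `n` is a power of `2`. -/
theorem switchStable_card_pow_two {V : Type*} [Fintype V] (D : Dgraph V)
    (hor : IsOriented D) (hconn : D.underlying.Connected) (hst : SwitchStable D) :
    2 ^ (Fintype.card V - 1) ∣ (Fintype.card V).factorial ∧
      ∃ k : ℕ, Fintype.card V = 2 ^ k := by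
  have : Nonempty V := hconn.nonempty
  rw [← Nat.card_eq_fintype_card]
  have hdvd : 2 ^ (Nat.card V - 1) ∣ (Nat.card V).factorial := by
    rw [← ncard_switchingClass hor hconn, ← orbit_switchingGroup hst,
      ← MulAction.index_stabilizer, ← Nat.card_perm]
    exact (Subgroup.index_dvd_card _).trans (Subgroup.card_subgroup_dvd_card _)
  exact ⟨hdvd, Nat.exists_eq_two_pow_of_two_pow_sub_one_dvd_factorial Nat.card_pos.ne' hdvd⟩
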